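/- Let A = (Q, Σ, ·, i, F) be a minimal DFA and k ≥ 0. If there exist words w1 and w2 with w1 ∼_k w2 and i·w1 ≠ i·w2, then there exist words w and w' such that w ∼_k w', w' is obtained from w by inserting a single letter at some position, and i·w ≠ i·w'. -/

import Mathlib

/-!
By Simon's lemma, `k`-equivalent words `w₁ ∼ₖ w₂` have a common superword `w ∼ₖ w₁`.
Every word sandwiched between `wᵢ` and `w` in the subword order is again `k`-equivalent to both,
so walking from `wᵢ` up to `w` by single-letter insertions stays inside the class. Since
`i·w₁ ≠ i·w₂`, at least one of the two walks ends in a state different from where it starts,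
so one of its steps changes the state.

Simon's lemma is proved by induction on `|u| + |v|` for `z ++ u ∼ₖ z ++ v`: equal first letters
move into the context `z`, and for distinct first letters `a ≠ b` the exchange lemma
`kEquiv_insert_left_or_right` lets one of them be inserted in front of the other word.
-/

/-- `subk k w` is the set of scattered subwords of `w` of length at most `k`. -/
def subk {α : Type*} (k : ℕ) (w : List α) : Set (List α) :=
  {u | u.length ≤ k ∧ u.Sublist w}

/-- Two words are `k`-equivalent if they have the same subwords of length at most `k`. -/
def kEquiv {α : Type*} (k : ℕ) (u v : List α) : Prop :=
  subk k u = subk k v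

/-- A language is `k`-piecewise testable (Simon's characterization):
`k`-equivalent words are equi-members. -/
def IsPT {α : Type*} (k : ℕ) (L : Language α) : Prop :=
  ∀ u v : List α, kEquiv k u v → (u ∈ L ↔ v ∈ L)

/-- A DFA is minimal if all states are reachable and pairwise distinguishable. -/
def IsMinimalDFA {α σ : Type*} (A : DFA α σ) : Prop :=
  (∀ q : σ, ∃ w : List α, A.eval w = q) ∧
  ∀ p q : σ,
    (∀ w : List α, (A.evalFrom p w ∈ A.accept ↔ A.evalFrom q w ∈ A.accept)) → p = q

/-- There is a simple path (pairwise distinct states) with `m` transitions in the DFA `A`. -/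
def DFAHasSimplePath {α σ : Type*} (A : DFA α σ) (m : ℕ) : Prop :=
  ∃ (qs : Fin (m + 1) → σ) (as : Fin m → α),
    Function.Injective qs ∧ ∀ i : Fin m, A.step (qs i.castSucc) (as i) = qs i.succ

/-- The depth of a DFA: the number of transitions on a longest simple path. -/
noncomputable def dfaDepth {α σ : Type*} (A : DFA α σ) : ℕ :=
  sSup {m | DFAHasSimplePath A m}

/-- There is a simple path (pairwise distinct states) with `m` transitions in the NFA `A`. -/
def NFAHasSimplePath {α σ : Type*} (A : NFA α σ) (m : ℕ) : Prop :=
  ∃ (qs : Fin (m + 1) → σ) (as : Fin m → α),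
    Function.Injective qs ∧ ∀ i : Fin m, qs i.succ ∈ A.step (qs i.castSucc) (as i)

/-- The depth of an NFA: the number of transitions on a longest simple path. -/
noncomputable def nfaDepth {α σ : Type*} (A : NFA α σ) : ℕ :=
  sSup {m | NFAHasSimplePath A m}

open List

section

variable {α : Type*} {k : ℕ}

theorem kEquiv.symm {u v : List α} (h : kEquiv k u v) : kEquiv k v u := Eq.symm h

theorem kEquiv.trans {u v w : List α} (h₁ : kEquiv k u v) (h₂ : kEquiv k v w) :
    kEquiv k u w :=
  Eq.trans h₁ h₂

theorem subk_mono {u v : List α} (h : u <+ v) : subk k u ⊆ subk k v :=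
  fun _ hs => ⟨hs.1, hs.2.trans h⟩

theorem kEquiv.sublist_iff {u v s : List α} (h : kEquiv k u v) (hs : s.length ≤ k) :
    s <+ u ↔ s <+ v := by
  simpa [subk, hs] using Set.ext_iff.mp h s

theorem kEquiv_of_sublist_of_sublist {u v w : List α} (huv : u <+ v) (hvw : v <+ w)
    (h : kEquiv k u w) : kEquiv k u v :=
  (subk_mono huv).antisymm fun _ hs => h ▸ subk_mono hvw hs

def IsBlocked (z p : List α) (c : α) : Prop :=
  p <+ z ∧ ¬ p ++ [c] <+ z

theorem IsBlocked.cons_sublist {z y p x : List α} {c : α} (hb : IsBlocked z p c)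
    (h : p ++ c :: x <+ z ++ y) : c :: x <+ y := by
  obtain ⟨l₁, l₂, hsplit, h₁, h₂⟩ := sublist_append_iff.mp h
  rcases append_eq_append_iff.mp hsplit with ⟨_ | ⟨e, w⟩, rfl, hw⟩ | ⟨w, rfl, rfl⟩
  · exact hw ▸ h₂
  · obtain rfl : c = e := (cons.inj hw).1
    exact absurd ((((nil_sublist w).cons_cons c).append_left p).trans h₁) hb.2
  · exact (sublist_append_right w _).trans h₂

-- `p` is the longest prefix of `s` that embeds in `z`.
theorem sublist_or_exists_isBlocked (z s : List α) :
    s <+ z ∨ ∃ p c t, s = p ++ c :: t ∧ IsBlocked z p c := by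
  classical
  by_cases hs : s <+ z
  · exact Or.inl hs
  obtain ⟨n, hn, hmax, hle⟩ : ∃ n, s.take n <+ z ∧
      (∀ m, n < m → m ≤ s.length → ¬ s.take m <+ z) ∧ n ≤ s.length :=
    ⟨_, Nat.findGreatest_spec (P := fun n => s.take n <+ z) (Nat.zero_le _) (by simp),
      fun _ => Nat.findGreatest_is_greatest, Nat.findGreatest_le _⟩
  have hlt : n < s.length := hle.lt_of_ne (by rintro rfl; exact hs (by simpa using hn))
  have htake : s.take (n + 1) = s.take n ++ [s[n]] := by
    rw [take_add_one, getElem?_eq_getElem hlt]; rfl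
  refine Or.inr ⟨s.take n, s[n], s.drop (n + 1), ?_, hn, fun h => ?_⟩
  · rw [← drop_eq_getElem_cons hlt, take_append_drop]
  · exact hmax (n + 1) (Nat.lt_succ_self n) hlt (htake ▸ h)

theorem IsBlocked.sublist_iff_cons_sublist {z y y' p x : List α} {c : α}
    (hb : IsBlocked z p c) (h : kEquiv k (z ++ c :: y) (z ++ y'))
    (hx : p.length + x.length + 1 ≤ k) : x <+ y ↔ c :: x <+ y' := by
  have hlen : (p ++ c :: x).length ≤ k := by simp only [length_append, length_cons]; omega
  constructor
  · exact fun hxy => hb.cons_sublist ((h.sublist_iff hlen).mp (hb.1.append (hxy.cons_cons c)))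
  · exact fun hxy => cons_sublist_cons.mp
      (hb.cons_sublist ((h.sublist_iff hlen).mpr (hb.1.append hxy)))

theorem exists_isBlocked_of_not_kEquiv {z w : List α} {c : α}
    (hne : ¬ kEquiv k (z ++ c :: w) (z ++ w)) :
    ∃ p t, IsBlocked z p c ∧ t <+ w ∧ ¬ c :: t <+ w ∧ p.length + t.length + 1 ≤ k := by
  have hsub : subk k (z ++ w) ⊆ subk k (z ++ c :: w) :=
    subk_mono ((sublist_cons_self c w).append_left z)
  obtain ⟨s, ⟨hslen, hs⟩, hsw⟩ := Set.not_subset.mp fun h => hne (h.antisymm hsub)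
  have hsw' : ¬ s <+ z ++ w := fun h => hsw ⟨hslen, h⟩
  rcases sublist_or_exists_isBlocked z s with hz | ⟨p, d, t, rfl, hb⟩
  · exact absurd (hz.trans (sublist_append_left z w)) hsw'
  have hdt : d :: t <+ c :: w := hb.cons_sublist hs
  have hdtw : ¬ d :: t <+ w := fun h => hsw' (hb.1.append h)
  obtain rfl : d = c := by_contra fun hdc => hdtw (hdt.of_cons_of_ne hdc)
  refine ⟨p, t, hb, cons_sublist_cons.mp hdt, hdtw, ?_⟩
  simp only [length_append, length_cons] at hslen
  omega

theorem cons_sublist_of_kEquiv_of_isBlocked {z y₁ y₂ p p' t : List α} {a b : α} (hab : a ≠ b)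
    (h : kEquiv k (z ++ a :: y₁) (z ++ b :: y₂)) (hpb : IsBlocked z p b)
    (hpa : IsBlocked z p' a) (hpp : p'.length ≤ p.length) (ht : t <+ a :: y₁)
    (hL : p.length + t.length + 1 ≤ k) : b :: t <+ a :: y₁ := by
  obtain ⟨t₀, ht₀, htt₀, hlen⟩ : ∃ t₀, t₀ <+ y₁ ∧ t <+ a :: t₀ ∧ t₀.length ≤ t.length := by
    rcases sublist_cons_iff.mp ht with ht | ⟨t₀, rfl, ht₀⟩
    · exact ⟨t, ht, sublist_cons_self a t, le_rfl⟩
    · exact ⟨t₀, ht₀, Sublist.refl _, by simp⟩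
  have hat₀ : a :: t₀ <+ y₂ :=
    ((hpa.sublist_iff_cons_sublist h (by omega)).mp ht₀).of_cons_of_ne hab
  exact (hpb.sublist_iff_cons_sublist h.symm hL).mp (htt₀.trans hat₀)

theorem kEquiv_insert_left_or_right {z y₁ y₂ : List α} {a b : α} (hab : a ≠ b)
    (h : kEquiv k (z ++ a :: y₁) (z ++ b :: y₂)) :
    kEquiv k (z ++ b :: a :: y₁) (z ++ a :: y₁) ∨
      kEquiv k (z ++ a :: b :: y₂) (z ++ b :: y₂) := by
  by_contra! hcon
  -- Each failed insertion yields a blocked witness; the one with the longer blocker is refuted.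
  obtain ⟨p, t, hpb, ht, hbt, hL⟩ := exists_isBlocked_of_not_kEquiv hcon.1
  obtain ⟨p', t', hpa, ht', hat', hL'⟩ := exists_isBlocked_of_not_kEquiv hcon.2
  rcases le_total p'.length p.length with hpp | hpp
  · exact hbt (cons_sublist_of_kEquiv_of_isBlocked hab h hpb hpa hpp ht hL)
  · exact hat' (cons_sublist_of_kEquiv_of_isBlocked hab.symm h.symm hpa hpb hpp ht' hL')

theorem exists_common_supersequence_of_kEquiv_append {z u v : List α}
    (h : kEquiv k (z ++ u) (z ++ v)) : ∃ w, u <+ w ∧ v <+ w ∧ kEquiv k (z ++ w) (z ++ u) := by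
  match u, v, h with
  | [], v, h => exact ⟨v, nil_sublist v, Sublist.refl v, h.symm⟩
  | a :: u, [], _ => exact ⟨a :: u, Sublist.refl _, nil_sublist _, rfl⟩
  | a :: u, b :: v, h =>
    by_cases hab : a = b
    · subst hab
      obtain ⟨w, hu, hv, hw⟩ :=
        exists_common_supersequence_of_kEquiv_append (z := z ++ [a]) (by simpa using h)
      exact ⟨a :: w, hu.cons_cons a, hv.cons_cons a, by simpa using hw⟩
    rcases kEquiv_insert_left_or_right hab h with hb | ha
    · obtain ⟨w, hu, hv, hw⟩ := exists_common_supersequence_of_kEquiv_append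
        (z := z ++ [b]) (u := a :: u) (v := v) (by simpa using hb.trans h)
      refine ⟨b :: w, hu.cons b, hv.cons_cons b, ?_⟩
      exact (show kEquiv k (z ++ b :: w) (z ++ b :: a :: u) by simpa using hw).trans hb
    · obtain ⟨w, hu, hv, hw⟩ := exists_common_supersequence_of_kEquiv_append
        (z := z ++ [a]) (u := u) (v := b :: v) (by simpa using h.trans ha.symm)
      exact ⟨a :: w, hu.cons_cons a, hv.cons a, by simpa using hw⟩
termination_by u.length + v.length

theorem kEquiv.exists_common_supersequence {u v : List α} (h : kEquiv k u v) :
    ∃ w, u <+ w ∧ v <+ w ∧ kEquiv k w u :=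
  exists_common_supersequence_of_kEquiv_append (z := []) h

theorem List.Sublist.exists_insert_sublist {u w : List α} (h : u <+ w) (hne : u ≠ w) :
    ∃ x y c, u = x ++ y ∧ x ++ c :: y <+ w := by
  induction h with
  | slnil => exact absurd rfl hne
  | cons a h _ => exact ⟨[], _, a, rfl, h.cons_cons a⟩
  | cons_cons a _ ih =>
    obtain ⟨x, y, c, rfl, hxy⟩ := ih fun he => hne (he ▸ rfl)
    exact ⟨a :: x, y, c, rfl, hxy.cons_cons a⟩

theorem exists_insert_kEquiv_ne_of_sublist {β : Type*} (f : List α → β) {u w : List α}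
    (huw : u <+ w) (h : kEquiv k u w) (hf : f u ≠ f w) :
    ∃ x y c, kEquiv k (x ++ y) (x ++ c :: y) ∧ f (x ++ y) ≠ f (x ++ c :: y) := by
  obtain ⟨x, y, c, hu, hxy⟩ := huw.exists_insert_sublist fun he => hf (congrArg f he)
  have hlen : u.length < (x ++ c :: y).length ∧ (x ++ c :: y).length ≤ w.length := by
    simp only [hu, length_append, length_cons]
    exact ⟨by omega, by simpa using hxy.length_le⟩
  subst hu
  have hmid : kEquiv k (x ++ y) (x ++ c :: y) :=
    kEquiv_of_sublist_of_sublist ((sublist_cons_self c y).append_left x) hxy h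
  by_cases hfm : f (x ++ y) = f (x ++ c :: y)
  · exact exists_insert_kEquiv_ne_of_sublist f hxy (hmid.symm.trans h) (hfm ▸ hf)
  · exact ⟨x, y, c, hmid, hfm⟩
termination_by w.length - u.length
decreasing_by omega

theorem exists_insert_kEquiv_ne {β : Type*} (f : List α → β) {u v : List α}
    (h : kEquiv k u v) (hf : f u ≠ f v) :
    ∃ x y c, kEquiv k (x ++ y) (x ++ c :: y) ∧ f (x ++ y) ≠ f (x ++ c :: y) := by
  obtain ⟨w, hu, hv, hw⟩ := h.exists_common_supersequence
  by_cases hfu : f u = f w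
  · exact exists_insert_kEquiv_ne_of_sublist f hv (h.symm.trans hw.symm)
      fun he => hf (hfu.trans he.symm)
  · exact exists_insert_kEquiv_ne_of_sublist f hu hw.symm hfu

end

theorem stmt3 {α σ : Type*} (A : DFA α σ)
    (k : ℕ) (w1 w2 : List α)
    (h : kEquiv k w1 w2) (hne : A.eval w1 ≠ A.eval w2) :
    ∃ w w' : List α, kEquiv k w w' ∧
      (∃ (u v : List α) (a : α), w = u ++ v ∧ w' = u ++ a :: v) ∧
      A.eval w ≠ A.eval w' := by
  obtain ⟨x, y, c, hk, hf⟩ := exists_insert_kEquiv_ne A.eval h hne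
  exact ⟨_, _, hk, ⟨x, y, c, rfl, rfl⟩, hf⟩
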